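/- The families {j_n}_{n≥1} and {S_n}_{n≥1}, where S_n := −j_n'/n = q^{−n} + Σ_{m≥1} b_n(m) q^m, are Zagier dual: c_m(n) = −b_n(m) for all integers n, m ≥ 1. -/

import Mathlib

noncomputable section

open Complex Matrix

/-! ## General notation -/

/-- `e(x) = exp(2πix)`. -/
def eC (x : ℂ) : ℂ := Complex.exp (2 * Real.pi * Complex.I * x)

/-- A fundamental discriminant: either `D ≡ 1 (mod 4)` and squarefree, or `D = 4m` with
`m ≡ 2, 3 (mod 4)` squarefree. -/
def IsFundamentalDiscriminant (D : ℤ) : Prop :=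
  (D % 4 = 1 ∧ Squarefree D) ∨
    (D % 4 = 0 ∧ Squarefree (D / 4) ∧ ((D / 4) % 4 = 2 ∨ (D / 4) % 4 = 3))

/-- `√D = i·√|D|` for a negative discriminant `D`, as a complex number. -/
def sqrtD (D : ℤ) : ℂ := Complex.I * Real.sqrt D.natAbs

/-- `ω_D = (D + √D)/2`, a generator of the ring of integers of `ℚ(√D)`. -/
def omegaD (D : ℤ) : ℂ := ((D : ℂ) + sqrtD D) / 2

/-- The ring of integers `O_D = ℤ[(D+√D)/2]` of `ℚ(√D)`, realized as a subring of `ℂ`. -/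
def OD (D : ℤ) : Subring ℂ := Subring.closure {omegaD D}

/-- The inverse different `𝔡_D⁻¹ = (1/√D)·O_D` of `ℚ(√D)`, as a subset of `ℂ`. -/
def invDiff (D : ℤ) : Set ℂ := {ν | ν * sqrtD D ∈ OD D}

/-- The trace `ν ↦ ν + ν̄` of `ℚ(√D)/ℚ`, extended to `ℂ`. -/
def trQ (ν : ℂ) : ℂ := ν + (starRingEnd ℂ) ν

abbrev SL2 (R : Type*) [CommRing R] := Matrix.SpecialLinearGroup (Fin 2) R

/-- The inclusion `SL₂(O_D) → M₂(ℂ)`. -/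
def toSL2C {D : ℤ} (g : SL2 (OD D)) : Matrix (Fin 2) (Fin 2) ℂ :=
  fun i j => (g.1 i j : ℂ)

/-- The action of `2×2` complex matrices on hyperbolic 3-space `H³ = {z + rj}`,
a point being encoded as the pair `P = (z, r) : ℂ × ℝ`:
`γ(z+rj) = ((az+b)(cz+d)^* + a c̄ r²)/(|cz+d|² + |c|²r²) + (r/(|cz+d|² + |c|²r²)) j`. -/
def actH3 (g : Matrix (Fin 2) (Fin 2) ℂ) (P : ℂ × ℝ) : ℂ × ℝ :=
  (((g 0 0 * P.1 + g 0 1) * (starRingEnd ℂ) (g 1 0 * P.1 + g 1 1)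
      + g 0 0 * (starRingEnd ℂ) (g 1 0) * ((P.2 ^ 2 : ℝ) : ℂ)) /
      ((Complex.normSq (g 1 0 * P.1 + g 1 1) + Complex.normSq (g 1 0) * P.2 ^ 2 : ℝ) : ℂ),
    P.2 / (Complex.normSq (g 1 0 * P.1 + g 1 1) + Complex.normSq (g 1 0) * P.2 ^ 2))

/-- The subgroup `Γ_∞ = {±(1 β; 0 1) : β ∈ O_D}` of `SL₂(O_D)`. -/
def GammaInf (D : ℤ) : Subgroup (SL2 (OD D)) where
  carrier := {g | g.1 1 0 = 0 ∧ g.1 0 0 = g.1 1 1}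
  one_mem' := by constructor <;> simp
  mul_mem' := by
    rintro a b ⟨ha1, ha2⟩ ⟨hb1, hb2⟩
    constructor <;>
      simp only [Matrix.SpecialLinearGroup.coe_mul, Matrix.mul_apply, Fin.sum_univ_two,
        ha1, hb1, ha2, hb2] <;> ring
  inv_mem' := by
    rintro a ⟨ha1, ha2⟩
    rw [Matrix.SpecialLinearGroup.SL2_inv_expl]
    constructor <;> simp [ha1, ha2]

/-! ## Bessel functions -/

/-- The modified Bessel function of the first kind `I_s(y)`, via its power series. -/
def besselI (s : ℂ) (y : ℝ) : ℂ :=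
  ∑' k : ℕ, ((y : ℂ) / 2) ^ (s + 2 * k) / ((k.factorial : ℂ) * Complex.Gamma (s + k + 1))

/-- The Bessel function of the first kind `J_s(y)`, via its power series. -/
def besselJ (s : ℂ) (y : ℝ) : ℂ :=
  ∑' k : ℕ, (-1) ^ k * ((y : ℂ) / 2) ^ (s + 2 * k) / ((k.factorial : ℂ) * Complex.Gamma (s + k + 1))

/-- The K-Bessel function `K_s(y)`, via its integral representation
`K_s(y) = ∫_0^∞ exp(-y cosh t) cosh(st) dt`. -/
def besselK (s : ℂ) (y : ℝ) : ℂ :=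
  ∫ t in Set.Ioi (0 : ℝ), Complex.exp (-(y : ℂ) * Real.cosh t) * Complex.cosh (s * t)

/-! ## Automorphic functions on hyperbolic 3-space -/

/-- The space of right cosets `Γ_∞ \ Γ` for `Γ = SL₂(O_D)` (which equals `Γ_∞ \ Γ` for
`Γ = PSL₂(O_D)` since `-1 ∈ Γ_∞`). -/
abbrev cosetInf (D : ℤ) := Quotient (QuotientGroup.rightRel (GammaInf D))

/-- The Niebur Poincaré series
`F_ν(P, s) = 2π|ν| Σ_{γ ∈ Γ_∞\Γ} r(γP) I_s(4π|ν| r(γP)) e(tr(ν z(γP)))`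
on hyperbolic 3-space, convergent for `Re(s) > 1`. -/
def nieburH3 (D : ℤ) (ν : ℂ) (P : ℂ × ℝ) (s : ℂ) : ℂ :=
  ((2 * Real.pi * ‖ν‖ : ℝ) : ℂ) *
    ∑' γ : cosetInf D,
      (((actH3 (toSL2C γ.out) P).2 : ℝ) : ℂ)
        * besselI s (4 * Real.pi * ‖ν‖ * (actH3 (toSL2C γ.out) P).2)
        * eC (trQ (ν * (actH3 (toSL2C γ.out) P).1))

/-- The weight `0` real-analytic Eisenstein series `E₀(P,s) = Σ_{γ ∈ Γ_∞\Γ} r(γP)^{s+1}`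
on hyperbolic 3-space, convergent for `Re(s) > 1`. -/
def eisH3 (D : ℤ) (P : ℂ × ℝ) (s : ℂ) : ℂ :=
  ∑' γ : cosetInf D, (((actH3 (toSL2C γ.out) P).2 : ℝ) : ℂ) ^ (s + 1)

/-- `F : ℂ → (ℂ × ℝ) → ℂ → ℂ`, `(ν, P, s) ↦ F_ν(P,s)`, is the family of analytically continued
Niebur Poincaré series on `H³`: for each `ν ∈ 𝔡_D⁻¹`, `ν ≠ 0`, and each `P ∈ H³`, the function
`s ↦ F_ν(P, s)` is holomorphic on `Re(s) > 1/2` and agrees with the Poincaré series for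
`Re(s) > 1`.  The harmonic function `J_ν` is then `J_ν(P) = F_ν(P, 1)`. -/
def IsNieburFamilyH3 (D : ℤ) (F : ℂ → (ℂ × ℝ) → ℂ → ℂ) : Prop :=
  ∀ ν ∈ invDiff D, ν ≠ 0 → ∀ P : ℂ × ℝ, 0 < P.2 →
    DifferentiableOn ℂ (F ν P) {s : ℂ | 1 / 2 < s.re} ∧
      ∀ s : ℂ, 1 < s.re → F ν P s = nieburH3 D ν P s

/-! ## Kronecker symbols and the twisting function -/

/-- The Kronecker symbol `(a/2)`. -/
def kron2 (a : ℤ) : ℤ :=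
  if a % 2 = 0 then 0 else if a % 8 = 1 ∨ a % 8 = 7 then 1 else -1

/-- The Kronecker symbol `(a/n)` for a positive integer `n`. -/
def kronecker (a : ℤ) (n : ℕ) : ℤ :=
  kron2 a ^ (n.factorization 2) * jacobiSym a (n / 2 ^ (n.factorization 2))

/-- The prime discriminant `p*` attached to a prime `p` dividing the fundamental
discriminant `D`, so that `D = ∏_{p ∣ D} p*`: for odd `p` one has `p* = (-1/p)·p`, and
`2*` is `D` divided by the product of the odd prime discriminants dividing `D`. -/
def primeDisc (D : ℤ) (p : ℕ) : ℤ :=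
  if p = 2 then
    D / ∏ q ∈ D.natAbs.primeFactors.erase 2, (if q % 4 = 1 then (q : ℤ) else -(q : ℤ))
  else if p % 4 = 1 then (p : ℤ) else -(p : ℤ)

/-- `D_c`: the fundamental discriminant dividing `D` which is the product of the prime
discriminants `p*` over the primes `p` dividing `gcd(c, D)`. -/
def Dc (D : ℤ) (c : ℕ) : ℤ :=
  ∏ p ∈ D.natAbs.primeFactors.filter (· ∣ c), primeDisc D p

/-- The norm `|x + y·ω_D|²`, as an integer. -/
def normInt (D : ℤ) (x y : ℤ) : ℤ := x ^ 2 + D * x * y + (D ^ 2 - D) / 4 * y ^ 2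

/-- A positive definite integral binary hermitian form `X = (a b; b̄ c)` of determinant
`det X = ac - |b|² = N` over `ℚ(√D)`, i.e. an element of `L⁺_N`. -/
structure HermForm (D : ℤ) (N : ℤ) where
  a : ℤ
  b : ℂ
  c : ℤ
  ha : 0 < a
  hc : 0 < c
  hb : b ∈ OD D
  hdet : (a : ℝ) * c - Complex.normSq b = N

/-- The `2×2` complex matrix `(a b; b̄ c)` of a hermitian form. -/
def matOf {D N : ℤ} (X : HermForm D N) : Matrix (Fin 2) (Fin 2) ℂ :=
  !![(X.a : ℂ), X.b; (starRingEnd ℂ) X.b, (X.c : ℂ)]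

open Classical in
/-- The factor `χ_{p*}` of the twisting function, evaluated on a form with diagonal
entries `a`, `c`: it is `(p*/a)` if `p ∤ a`, `(p*/c)` if `p ∤ c`, and `0` if `p ∣ gcd(a,c)`. -/
def chiP (D : ℤ) (p : ℕ) (a c : ℤ) : ℤ :=
  if ¬ (p : ℤ) ∣ a then kronecker (primeDisc D p) a.natAbs
  else if ¬ (p : ℤ) ∣ c then kronecker (primeDisc D p) c.natAbs
  else 0

/-- The twisting function `χ_D(X) = ∏_{p ∣ D} χ_{p*}(X)`. -/
def chiD {N : ℤ} (D : ℤ) (X : HermForm D N) : ℤ :=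
  ∏ p ∈ D.natAbs.primeFactors, chiP D p X.a X.c

/-- Two hermitian forms are equivalent if they lie in the same `Γ = PSL₂(O_D)`-orbit, where
`γ` acts by `X ↦ γXγ*`. -/
def hermRel (D N : ℤ) (X Y : HermForm D N) : Prop :=
  ∃ g : SL2 (OD D), matOf Y = toSL2C g * matOf X * (toSL2C g).conjTranspose

/-- The (finite) orbit space `Γ \ L⁺_N`. -/
abbrev hermOrbits (D N : ℤ) := Quot (hermRel D N)

/-- The order `|Γ_X|` of the stabilizer of the form `X` in `Γ = PSL₂(O_D)`, i.e. half the
order of its stabilizer in `SL₂(O_D)`. -/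
def stabOrder {D N : ℤ} (X : HermForm D N) : ℕ :=
  Nat.card {g : SL2 (OD D) // toSL2C g * matOf X * (toSL2C g).conjTranspose = matOf X} / 2

/-- The special point `P_X = b/c + (√N/c)·j ∈ H³` attached to a hermitian form `X` of
determinant `N`. -/
def specialPt {D : ℤ} (N : ℤ) (X : HermForm D N) : ℂ × ℝ :=
  (X.b / (X.c : ℂ), Real.sqrt (N : ℝ) / (X.c : ℝ))

/-- The `m`-th twisted trace `tr_{m,D}(f) = Σ_{X ∈ Γ\L⁺_{|D|m}} (χ_D(X)/|Γ_X|)·f(P_X)` of a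
`Γ`-invariant function `f` on `H³`. -/
def twTrace (D : ℤ) (m : ℤ) (f : ℂ × ℝ → ℂ) : ℂ :=
  ∑' q : hermOrbits D (|D| * m),
    ((chiD D q.out : ℤ) : ℂ) / (stabOrder q.out : ℂ) * f (specialPt (|D| * m) q.out)

/-- The natural number `|D|·|ν|²` attached to `ν ∈ 𝔡_D⁻¹`. -/
def nIdx (D : ℤ) (ν : ℂ) : ℕ := ⌊(D.natAbs : ℝ) * Complex.normSq ν⌋₊

/-! ## Kloosterman and exponential sums -/

/-- The Kloosterman sum `H_c(m, n) = (1/c) Σ_{d ∈ (ℤ/c)ˣ} e((nd - md')/c)`. -/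
def kloosterman (c : ℕ) (m n : ℤ) : ℂ :=
  if h : c = 0 then 0 else
    haveI : NeZero c := ⟨h⟩
    (c : ℂ)⁻¹ * ∑ d : (ZMod c)ˣ,
      eC (((n * ((d : ZMod c).val : ℤ) - m * (((d⁻¹ : (ZMod c)ˣ) : ZMod c).val : ℤ) : ℤ) : ℂ) / c)

open Classical in
/-- The exponential sum
`G̃_c(N, ν) = (D/D_c | c) Σ_{b ∈ O_D/cO_D, |b|² ≡ -N (c)} (D_c | (N + |b|²)/c) e(tr(νb)/c)`,
the sum running over representatives `b = x + yω_D` with `0 ≤ x, y < c`. -/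
def Gtilde (D : ℤ) (c : ℕ) (N : ℤ) (ν : ℂ) : ℂ :=
  (kronecker (D / Dc D c) c : ℂ) *
    ∑ p ∈ Finset.range c ×ˢ Finset.range c,
      if (c : ℤ) ∣ (normInt D p.1 p.2 + N) then
        (kronecker (Dc D c) (((N + normInt D p.1 p.2) / c).toNat) : ℂ) *
          eC (trQ (ν * ((p.1 : ℂ) + (p.2 : ℂ) * omegaD D)) / c)
      else 0

/-! ## The elliptic side: Niebur Poincaré series for `PSL₂(ℤ)` -/

/-- The subgroup `Γ'_∞ = {±(1 b; 0 1) : b ∈ ℤ}` of `SL₂(ℤ)`. -/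
def GammaInfZ : Subgroup (SL2 ℤ) where
  carrier := {g | g.1 1 0 = 0 ∧ g.1 0 0 = g.1 1 1}
  one_mem' := by constructor <;> simp
  mul_mem' := by
    rintro a b ⟨ha1, ha2⟩ ⟨hb1, hb2⟩
    constructor <;>
      simp only [Matrix.SpecialLinearGroup.coe_mul, Matrix.mul_apply, Fin.sum_univ_two,
        ha1, hb1, ha2, hb2] <;> ring
  inv_mem' := by
    rintro a ⟨ha1, ha2⟩
    rw [Matrix.SpecialLinearGroup.SL2_inv_expl]
    constructor <;> simp [ha1, ha2]

/-- The space of right cosets `Γ'_∞ \ Γ'` for `Γ' = SL₂(ℤ)`. -/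
abbrev cosetInfZ := Quotient (QuotientGroup.rightRel GammaInfZ)

/-- The Möbius action of `SL₂(ℤ)` on the upper half-plane (as a subset of `ℂ`). -/
def smulZ (g : SL2 ℤ) (τ : ℂ) : ℂ :=
  ((g.1 0 0 : ℂ) * τ + (g.1 0 1 : ℂ)) / ((g.1 1 0 : ℂ) * τ + (g.1 1 1 : ℂ))

/-- The Niebur Poincaré series
`F_n(τ, s) = π√n Σ_{M ∈ Γ'_∞\Γ'} (√v I_{s-1/2}(2πnv) e(-nu))|₀ M` for `PSL₂(ℤ)`,
convergent for `Re(s) > 1`. -/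
def nieburZ (n : ℕ) (τ : ℂ) (s : ℂ) : ℂ :=
  ((Real.pi * Real.sqrt n : ℝ) : ℂ) *
    ∑' γ : cosetInfZ,
      ((Real.sqrt (smulZ γ.out τ).im : ℝ) : ℂ)
        * besselI (s - 1 / 2) (2 * Real.pi * n * (smulZ γ.out τ).im)
        * eC (-(n : ℂ) * ((smulZ γ.out τ).re : ℂ))

/-- `𝓘_s(y) = √(π|y|/2)·I_{s-1/2}(|y|)`. -/
def scriptI (s : ℂ) (y : ℝ) : ℂ :=
  ((Real.sqrt (Real.pi * |y| / 2) : ℝ) : ℂ) * besselI (s - 1 / 2) |y|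

/-- `𝓚_s(y) = √(2|y|/π)·K_{s-1/2}(|y|)`. -/
def scriptK (s : ℂ) (y : ℝ) : ℂ :=
  ((Real.sqrt (2 * |y| / Real.pi) : ℝ) : ℂ) * besselK (s - 1 / 2) |y|

open Classical in
/-- The Fourier coefficients `c_n(m, s)` of the Niebur Poincaré series `F_n(τ, s)` for
`PSL₂(ℤ)`, given by series of Kloosterman sums and Bessel functions. -/
def cCoef (n : ℕ) (m : ℤ) (s : ℂ) : ℂ :=
  if 0 < m then
    ((2 * Real.pi * Real.sqrt ((n : ℝ) / |(m : ℝ)|) : ℝ) : ℂ) *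
      ∑' c : ℕ, kloosterman (c + 1) m n *
        besselI (2 * s - 1) (4 * Real.pi * Real.sqrt ((m.natAbs * n : ℕ) : ℝ) / (c + 1))
  else if m = 0 then
    4 * (Real.pi : ℂ) ^ ((1 : ℂ) + s) * (n : ℂ) ^ (s : ℂ) / ((2 * s - 1) * Complex.Gamma s) *
      ∑' c : ℕ, ((c + 1 : ℕ) : ℂ) ^ (1 - 2 * s) * kloosterman (c + 1) n 0
  else
    -(if m = -(n : ℤ) then 1 else 0) +
      ((2 * Real.pi * Real.sqrt ((n : ℝ) / |(m : ℝ)|) : ℝ) : ℂ) *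
        ∑' c : ℕ, kloosterman (c + 1) m n *
          besselJ (2 * s - 1) (4 * Real.pi * Real.sqrt ((m.natAbs * n : ℕ) : ℝ) / (c + 1))

/-- The family `{j_n}_{n ≥ 1}` of weakly holomorphic modular functions for `PSL₂(ℤ)` with
Fourier expansions `j_n(τ) = q^{-n} + Σ_{m ≥ 1} c_n(m) q^m`: each `j n` is holomorphic on the
upper half-plane, `SL₂(ℤ)`-invariant, and has the stated Fourier expansion with
coefficients `c n`. -/
def IsJFamily (c : ℕ → ℕ → ℂ) (j : ℕ → ℂ → ℂ) : Prop :=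
  ∀ n : ℕ, 1 ≤ n →
    (∀ τ : ℂ, 0 < τ.im → DifferentiableAt ℂ (j n) τ) ∧
      (∀ g : SL2 ℤ, ∀ τ : ℂ, 0 < τ.im → j n (smulZ g τ) = j n τ) ∧
        ∀ τ : ℂ, 0 < τ.im →
          j n τ = eC (-(n : ℂ) * τ) + ∑' m : ℕ, c n (m + 1) * eC (((m + 1 : ℕ) : ℂ) * τ)

/-- The divisor sum `σ_s(m) = Σ_{d ∣ m} d^s` with complex exponent. -/
def sigmaC (s : ℂ) (m : ℕ) : ℂ := ∑ d ∈ m.divisors, (d : ℂ) ^ s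

/-- The divisor sum `σ₁(n)`. -/
def sigma1 (n : ℕ) : ℕ := ∑ d ∈ n.divisors, d

/-- The Dirichlet L-series `L_D(s) = Σ_{n ≥ 1} (D/n)·n^{-s}`. -/
def LDir (D : ℤ) (s : ℂ) : ℂ := ∑' n : ℕ, (kronecker D (n + 1) : ℂ) / ((n + 1 : ℕ) : ℂ) ^ s

/-! ## Class numbers -/

/-- The imaginary quadratic field `ℚ(√D) ⊆ ℂ`. -/
def QK (D : ℤ) : IntermediateField ℚ ℂ := IntermediateField.adjoin ℚ {sqrtD D}

/-- The class number `h(D)` of `ℚ(√D)`. -/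
def classNum (D : ℤ) : ℕ := Nat.card (ClassGroup (NumberField.RingOfIntegers (QK D)))

/-- `w(D)`: half the number of units of `O_D`. -/
def halfUnits (D : ℤ) : ℕ := Nat.card (NumberField.RingOfIntegers (QK D))ˣ / 2

/-! ## Green's function and differential operators on `H³` -/

/-- `cosh d(P,Q)` for the hyperbolic distance `d` on `H³`. -/
def coshDist (P Q : ℂ × ℝ) : ℝ :=
  (Complex.normSq (P.1 - Q.1) + P.2 ^ 2 + Q.2 ^ 2) / (2 * P.2 * Q.2)

/-- `φ_s(t) = (t + √(t²-1))^{-s} (t²-1)^{-1/2}`. -/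
def phiGreen (s : ℂ) (t : ℝ) : ℂ :=
  ((t + Real.sqrt (t ^ 2 - 1) : ℝ) : ℂ) ^ (-s) * (((Real.sqrt (t ^ 2 - 1) : ℝ) : ℂ))⁻¹

/-- The quotient `PSL₂(O_D) = SL₂(O_D)/{±1}`, realized as a coset space. -/
abbrev PSLcosets (D : ℤ) :=
  Quotient (QuotientGroup.rightRel (Subgroup.zpowers (-1 : SL2 (OD D))))

/-- The automorphic Green's function `G_s(P₁,P₂) = π Σ_{γ ∈ PSL₂(O_D)} φ_s(cosh d(P₁, γP₂))`. -/
def greenFn (D : ℤ) (s : ℂ) (P Q : ℂ × ℝ) : ℂ :=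
  (Real.pi : ℂ) * ∑' γ : PSLcosets D, phiGreen s (coshDist P (actH3 (toSL2C γ.out) Q))

/-- Directional derivative of a function on `ℂ × ℝ`. -/
def dDir (f : ℂ × ℝ → ℂ) (w : ℂ × ℝ) (P : ℂ × ℝ) : ℂ := fderiv ℝ f P w

/-- The hyperbolic Laplacian `Δ = -r²(∂²_x + ∂²_y + ∂²_r) + r ∂_r` on `H³`, applied at a
point `P = (z, r)`. -/
def hypLaplacian (f : ℂ × ℝ → ℂ) (P : ℂ × ℝ) : ℂ :=
  -((P.2 : ℂ) ^ 2) * (dDir (dDir f (1, 0)) (1, 0) P + dDir (dDir f (Complex.I, 0)) (Complex.I, 0) P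
      + dDir (dDir f (0, 1)) (0, 1) P)
    + (P.2 : ℂ) * dDir f (0, 1) P

/-! ## Weight 2 automorphic forms on `H³` -/

/-- The factor of automorphy of weight `2` (symmetric square) for the group `SL₂(ℂ)` acting
on `H³`: for `γ = (a b; c d)` and `P = z + rj`, with `u = cz + d` and `v = cr`, this is the
`3×3` matrix implementing the symmetric square of `(u -v; v̄ ū)`, normalized so that a vector
`(-∂_z L, ∂_r L, ∂_{z̄} L)ᵗ` built from a `Γ`-invariant function `L` transforms by it. -/
def autFac2 (g : Matrix (Fin 2) (Fin 2) ℂ) (P : ℂ × ℝ) : Matrix (Fin 3) (Fin 3) ℂ :=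
  let u : ℂ := g 1 0 * P.1 + g 1 1
  let v : ℂ := g 1 0 * (P.2 : ℂ)
  let ub : ℂ := (starRingEnd ℂ) u
  let vb : ℂ := (starRingEnd ℂ) v
  !![u ^ 2, -(u * v), v ^ 2;
     2 * u * vb, u * ub - v * vb, -(2 * ub * v);
     vb ^ 2, ub * vb, ub ^ 2]

/-- The special functions `K̃_ℓ`: `K̃₂ = -K₁`, `K̃₁ = 2iK₀`, `K̃₀ = K₁`. -/
def Ktilde (ℓ : ℕ) (y : ℝ) : ℂ :=
  if ℓ = 2 then -besselK 1 y else if ℓ = 1 then 2 * Complex.I * besselK 0 y else besselK 1 y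

/-- The set `T_{m,D}` of special points attached to forms `X ∈ L⁺_{|D|m}` with
`χ_D(X) ≠ 0`. -/
def Tset (D m : ℤ) : Set (ℂ × ℝ) :=
  {P | ∃ X : HermForm D (|D| * m), chiD D X ≠ 0 ∧ P = specialPt (|D| * m) X}



/-!
For `n, m ≥ 1` the product `j_m · j_n'` transforms like a modular form of weight `2`, so its
primitive `F` on the upper half-plane (obtained from Morera's theorem on the disc through the
Cayley transform) satisfies `F(-1/τ) = F(τ) + const` and `F(τ + 1) = F(τ) + const`. The first
constant vanishes at `τ = i`; the second then vanishes at the fixed point `ρ = -1/(ρ + 1)` of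
`ST`. Hence the constant term `∫₀¹ j_m j_n'(τ + t) dt = F(τ + 1) - F(τ)` is zero, while
multiplying out the `q`-expansions shows that it equals `-n (c_m(n) + b_n(m))`.

The `q`-expansions are `tsum`s, so their convergence has to be proved: a `q`-series that diverges
somewhere diverges at every lower point, and there `q⁻ⁿ` alone would have to be modular.
-/

local notation "ℍₒ" => UpperHalfPlane.upperHalfPlaneSet

lemma ne_zero_of_mem_upperHalfPlaneSet {τ : ℂ} (hτ : τ ∈ ℍₒ) : τ ≠ 0 :=
  ne_of_apply_ne im (by simpa using hτ.ne')

lemma neg_inv_mem_upperHalfPlaneSet {τ : ℂ} (hτ : τ ∈ ℍₒ) : -τ⁻¹ ∈ ℍₒ := by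
  have : 0 < normSq τ := normSq_pos.mpr (ne_zero_of_mem_upperHalfPlaneSet hτ)
  show 0 < (-τ⁻¹).im
  rw [neg_im, inv_im, neg_div, neg_neg]
  exact div_pos hτ this

lemma hasDerivAt_neg_inv {τ : ℂ} (hτ : τ ∈ ℍₒ) : HasDerivAt (fun w => -w⁻¹) (τ ^ 2)⁻¹ τ :=
  (hasDerivAt_inv (ne_zero_of_mem_upperHalfPlaneSet hτ)).neg.congr_deriv (neg_neg _)

theorem DifferentiableOn.isExactOn_upperHalfPlaneSet {f : ℂ → ℂ}
    (hf : DifferentiableOn ℂ f ℍₒ) : IsExactOn f ℍₒ := by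
  -- pull `f` back to the unit disc along the Cayley transform `φ`, whose inverse is `ψ`
  set φ : ℂ → ℂ := fun w => I * (1 + w) / (1 - w)
  have hφ : ∀ w ∈ Metric.ball (0 : ℂ) 1, 1 - w ≠ 0 ∧ 0 < (φ w).im := by
    intro w hw
    rw [mem_ball_zero_iff, ← sq_lt_one_iff₀ (norm_nonneg _), ← normSq_eq_norm_sq] at hw
    have hw1 : 1 - w ≠ 0 := by
      intro h; rw [sub_eq_zero] at h; subst h; simp at hw
    refine ⟨hw1, ?_⟩
    have : (φ w).im = (1 - normSq w) / normSq (1 - w) := by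
      simp only [φ, div_im, mul_im, mul_re, I_re, I_im, add_re, add_im, one_re, one_im, sub_re,
        sub_im, normSq_apply]
      ring
    rw [this]
    exact div_pos (by linarith) (normSq_pos.mpr hw1)
  have hg : DifferentiableOn ℂ (fun w => f (φ w) * (2 * I / (1 - w) ^ 2)) (Metric.ball 0 1) := by
    intro w hw
    obtain ⟨hw1, hwH⟩ := hφ w hw
    have : DifferentiableAt ℂ φ w := by fun_prop (disch := exact hw1)
    refine DifferentiableAt.differentiableWithinAt ?_
    exact ((hf.differentiableAt (UpperHalfPlane.isOpen_upperHalfPlaneSet.mem_nhds hwH)).comp w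
      this).mul (by fun_prop (disch := simp [hw1]))
  obtain ⟨G, hG⟩ := hg.isExactOn_ball
  set ψ : ℂ → ℂ := fun z => (z - I) / (z + I)
  refine ⟨fun z => G (ψ z), fun z hz => ?_⟩
  have hzI : z + I ≠ 0 :=
    ne_zero_of_mem_upperHalfPlaneSet (show 0 < (z + I).im by simpa using add_pos hz one_pos)
  have hψ : ψ z ∈ Metric.ball (0 : ℂ) 1 := by
    rw [mem_ball_zero_iff, norm_div, div_lt_one (norm_pos_iff.mpr hzI),
      ← sq_lt_sq₀ (norm_nonneg _) (norm_nonneg _), ← normSq_eq_norm_sq, ← normSq_eq_norm_sq]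
    simp only [normSq_apply, add_re, add_im, sub_re, sub_im, I_re, I_im]
    change 0 < z.im at hz
    nlinarith
  have hd : HasDerivAt ψ (2 * I / (z + I) ^ 2) z :=
    (((hasDerivAt_id z).sub_const I).div ((hasDerivAt_id z).add_const I) hzI).congr_deriv
      (by simp only [id]; ring)
  have h1 : 1 - ψ z = 2 * I / (z + I) := by simp only [ψ]; field_simp; ring
  have h2 : φ (ψ z) = z := by
    simp only [φ, h1, ψ]
    field_simp
    ring
  refine ((hG _ hψ).comp z hd).congr_deriv ?_
  simp only [h1, h2]
  field_simp

lemma eq_of_hasDerivAt_zero_upperHalfPlaneSet {g : ℂ → ℂ} (hg : ∀ τ ∈ ℍₒ, HasDerivAt g 0 τ)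
    {τ τ' : ℂ} (hτ : τ ∈ ℍₒ) (hτ' : τ' ∈ ℍₒ) : g τ = g τ' :=
  UpperHalfPlane.isOpen_upperHalfPlaneSet.is_const_of_deriv_eq_zero
    (convex_halfSpace_im_gt 0).isPreconnected
    (fun z hz => (hg z hz).differentiableAt.differentiableWithinAt) (fun z hz => (hg z hz).deriv)
    hτ hτ'

/-- `f` is invariant under the weight `k` slash action of the generators `T` and `S` of
`SL₂(ℤ)` on the upper half-plane. -/
def IsSlashInvariant (k : ℕ) (f : ℂ → ℂ) : Prop :=
  (∀ τ ∈ ℍₒ, f (τ + 1) = f τ) ∧ ∀ τ ∈ ℍₒ, f (-τ⁻¹) = τ ^ k * f τ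

namespace IsSlashInvariant

lemma of_smulZ {f : ℂ → ℂ} (hf : ∀ g : SL2 ℤ, ∀ τ : ℂ, 0 < τ.im → f (smulZ g τ) = f τ) :
    IsSlashInvariant 0 f := by
  refine ⟨fun τ hτ => ?_, fun τ hτ => ?_⟩
  · simpa [smulZ, ModularGroup.T] using hf ModularGroup.T τ hτ
  · simpa [smulZ, ModularGroup.S, neg_div] using hf ModularGroup.S τ hτ

lemma mul {k l : ℕ} {f g : ℂ → ℂ} (hf : IsSlashInvariant k f) (hg : IsSlashInvariant l g) :
    IsSlashInvariant (k + l) (f * g) :=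
  ⟨fun τ hτ => by simp only [Pi.mul_apply, hf.1 τ hτ, hg.1 τ hτ],
    fun τ hτ => by simp only [Pi.mul_apply, hf.2 τ hτ, hg.2 τ hτ, pow_add]; ring⟩

lemma deriv {F F' : ℂ → ℂ} (hF : IsSlashInvariant 0 F)
    (hF' : ∀ τ ∈ ℍₒ, HasDerivAt F (F' τ) τ) : IsSlashInvariant 2 F' := by
  have hnhds := fun τ (hτ : τ ∈ ℍₒ) => UpperHalfPlane.isOpen_upperHalfPlaneSet.mem_nhds hτ
  refine ⟨fun τ hτ => ?_, fun τ hτ => ?_⟩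
  · have hτ1 : τ + 1 ∈ ℍₒ := by simpa using hτ
    refine (mul_one _).symm.trans (((hF' _ hτ1).comp τ ((hasDerivAt_id τ).add_const 1)).unique
      ((hF' τ hτ).congr_of_eventuallyEq ?_))
    filter_upwards [hnhds τ hτ] with w hw using hF.1 w hw
  · have h := ((hF' _ (neg_inv_mem_upperHalfPlaneSet hτ)).comp τ (hasDerivAt_neg_inv hτ)).unique
      ((hF' τ hτ).congr_of_eventuallyEq ?_)
    · rw [← h, mul_left_comm,
        mul_inv_cancel₀ (pow_ne_zero _ (ne_zero_of_mem_upperHalfPlaneSet hτ)), mul_one]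
    filter_upwards [hnhds τ hτ] with w hw
    simpa using hF.2 w hw

theorem integral_eq_zero {f : ℂ → ℂ} (hf : DifferentiableOn ℂ f ℍₒ) (hinv : IsSlashInvariant 2 f)
    {x : ℂ} (hx : x ∈ ℍₒ) : ∫ t in (0 : ℝ)..1, f (x + t) = 0 := by
  obtain ⟨F, hF⟩ := hf.isExactOn_upperHalfPlaneSet
  have hτ1 : ∀ τ ∈ ℍₒ, τ + 1 ∈ ℍₒ := fun τ hτ => by simpa using hτ
  have hFS : ∀ τ ∈ ℍₒ, F (-τ⁻¹) = F τ := by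
    have hd : ∀ τ ∈ ℍₒ, HasDerivAt (fun w => F (-w⁻¹) - F w) 0 τ := fun τ hτ =>
      (((hF _ (neg_inv_mem_upperHalfPlaneSet hτ)).comp τ (hasDerivAt_neg_inv hτ)).sub
        (hF τ hτ)).congr_deriv (by
          have hτ0 := ne_zero_of_mem_upperHalfPlaneSet hτ
          rw [hinv.2 τ hτ]; field_simp; ring)
    intro τ hτ
    exact sub_eq_zero.mp
      (by simpa using eq_of_hasDerivAt_zero_upperHalfPlaneSet hd hτ (show I ∈ ℍₒ by simp))
  have hFT : ∀ τ ∈ ℍₒ, F (τ + 1) = F τ := by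
    have hd : ∀ τ ∈ ℍₒ, HasDerivAt (fun w => F (w + 1) - F w) 0 τ := fun τ hτ =>
      (((hF _ (hτ1 τ hτ)).comp τ ((hasDerivAt_id τ).add_const 1)).sub (hF τ hτ)).congr_deriv
        (by simp [hinv.1 τ hτ])
    have hρ : (UpperHalfPlane.ρ : ℂ) ∈ ℍₒ := UpperHalfPlane.ρ.im_pos
    have hρfix : -((UpperHalfPlane.ρ : ℂ) + 1)⁻¹ = UpperHalfPlane.ρ := by
      have h0 := ne_zero_of_mem_upperHalfPlaneSet (hτ1 _ hρ)
      field_simp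
      linear_combination -UpperHalfPlane.ρ_sq
    intro τ hτ
    have := eq_of_hasDerivAt_zero_upperHalfPlaneSet hd hτ hρ
    rw [← hFS _ (hτ1 _ hρ), hρfix, sub_self] at this
    exact sub_eq_zero.mp this
  have hline : ∀ t : ℝ, x + t ∈ ℍₒ := fun t => by simpa using hx
  rw [intervalIntegral.integral_eq_sub_of_hasDerivAt (f := fun t : ℝ => F (x + t))
    (fun t _ => (((hF _ (hline t)).comp (t : ℂ) ((hasDerivAt_id _).const_add x)).comp_ofReal
      ).congr_deriv (mul_one _))
    ((hf.continuousOn.comp_continuous (by fun_prop) hline).intervalIntegrable 0 1)]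
  simp [hFT x hx]

end IsSlashInvariant

lemma eC_add (x y : ℂ) : eC (x + y) = eC x * eC y := by
  rw [eC, eC, eC, ← Complex.exp_add, mul_add]

lemma eC_ne_zero (x : ℂ) : eC x ≠ 0 := Complex.exp_ne_zero _

lemma eC_nat_mul (k : ℕ) (x : ℂ) : eC (k * x) = eC x ^ k := by
  rw [eC, eC, ← Complex.exp_nat_mul, mul_left_comm]

lemma norm_eC (x : ℂ) : ‖eC x‖ = Real.exp (-(2 * Real.pi * x.im)) := by
  simp [eC, Complex.norm_exp, mul_re]

lemma norm_eC_int_mul_add_ofReal (d : ℤ) (x : ℂ) (t : ℝ) :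
    ‖eC (d * (x + t))‖ = ‖eC (d * x)‖ := by
  simp [norm_eC, mul_im]

lemma continuous_eC_int_mul_add_ofReal (d : ℤ) (x : ℂ) :
    Continuous fun t : ℝ => eC (d * (x + t)) := by
  unfold eC; fun_prop

lemma integral_eC_int_mul (d : ℤ) (x : ℂ) :
    ∫ t in (0 : ℝ)..1, eC (d * (x + t)) = if d = 0 then 1 else 0 := by
  split_ifs with hd
  · simp [hd, eC]
  have hc : 2 * Real.pi * I * d ≠ 0 := by simp [Real.pi_ne_zero, hd]
  have hsplit : ∀ t : ℝ, eC (d * (x + t)) = eC (d * x) * Complex.exp (2 * Real.pi * I * d * t) := by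
    intro t; rw [eC, eC, ← Complex.exp_add]; ring_nf
  have hperiod : Complex.exp (2 * Real.pi * I * d) = 1 := by
    rw [mul_comm]; exact Complex.exp_int_mul_two_pi_mul_I d
  simp [hsplit, intervalIntegral.integral_const_mul, integral_exp_mul_complex hc, hperiod]

lemma integral_tsum_eC {ι : Type*} [Countable ι] (a : ι → ℂ) (d : ι → ℤ) (x : ℂ)
    (h : Summable fun i => ‖a i * eC (d i * x)‖) :
    ∫ t in (0 : ℝ)..1, ∑' i, a i * eC (d i * (x + t)) = ∑' i, if d i = 0 then a i else 0 := by
  rw [intervalIntegral.integral_of_le zero_le_one,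
    ← MeasureTheory.integral_tsum_of_summable_integral_norm]
  · congr 1 with i
    rw [← intervalIntegral.integral_of_le zero_le_one, intervalIntegral.integral_const_mul,
      integral_eC_int_mul]
    split_ifs <;> simp
  · exact fun i => (continuous_const.mul (continuous_eC_int_mul_add_ofReal _ _)).integrableOn_Ioc
  · simpa [norm_mul, norm_eC_int_mul_add_ofReal] using h

/-- The holomorphic part `∑_{k ≥ 1} a(k) q^k` of a `q`-expansion, `q = e(τ)`. -/
def qSeries (a : ℕ → ℂ) (τ : ℂ) : ℂ := ∑' k : ℕ, a (k + 1) * eC (((k + 1 : ℕ) : ℂ) * τ)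

section qSeries

variable {a b : ℕ → ℂ} {x : ℂ}

lemma summable_qSeries_of_im_lt {x' : ℂ}
    (ha : Summable fun k => a (k + 1) * eC ((k + 1 : ℕ) * x)) (h : x.im < x'.im) :
    Summable fun k => a (k + 1) * eC ((k + 1 : ℕ) * x') := by
  simp only [eC_nat_mul] at ha ⊢
  have hlt : ‖eC x'‖ < ‖eC x‖ := by
    rw [norm_eC, norm_eC, Real.exp_lt_exp]
    nlinarith [Real.pi_pos]
  have hshift : Summable fun k => a (k + 1) * eC x ^ k :=
    (ha.mul_right (eC x)⁻¹).congr fun k => by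
      rw [pow_succ, ← mul_assoc, mul_inv_cancel_right₀ (eC_ne_zero x)]
  refine ((summable_powerSeries_of_norm_lt hshift.hasSum.tendsto_sum_nat.cauchySeq hlt).mul_right
    (eC x')).congr fun k => ?_
  rw [pow_succ, mul_assoc]

lemma continuous_qSeries_add_ofReal (ha : Summable fun k => a (k + 1) * eC ((k + 1 : ℕ) * x)) :
    Continuous fun t : ℝ => qSeries a (x + t) := by
  refine continuous_tsum (fun k => ?_) (summable_norm_iff.mpr ha) (fun k t => ?_)
  · exact continuous_const.mul (by exact_mod_cast continuous_eC_int_mul_add_ofReal (k + 1) x)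
  · simp [norm_eC, mul_im]

lemma integral_eC_mul_qSeries {m : ℕ} (hm : 1 ≤ m)
    (ha : Summable fun k => a (k + 1) * eC ((k + 1 : ℕ) * x)) :
    ∫ t in (0 : ℝ)..1, eC (-m * (x + t)) * qSeries a (x + t) = a m := by
  have hterm : ∀ τ : ℂ, eC (-m * τ) * qSeries a τ =
      ∑' k : ℕ, a (k + 1) * eC (((k + 1 - m : ℤ) : ℂ) * τ) := by
    intro τ
    rw [qSeries, ← tsum_mul_left]
    congr 1 with k
    rw [mul_left_comm, ← eC_add]
    push_cast; ring_nf
  simp only [hterm]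
  rw [integral_tsum_eC, tsum_eq_single (m - 1)]
  · rw [if_pos (by omega), Nat.sub_add_cancel hm]
  · intro k hk
    rw [if_neg (by omega)]
  · refine ((summable_norm_iff.mpr ha).mul_right ‖eC (-m * x)‖).congr fun k => ?_
    rw [norm_mul, norm_mul, mul_assoc, ← norm_mul, ← eC_add]
    push_cast; ring_nf

lemma integral_qSeries_mul_qSeries (ha : Summable fun k => a (k + 1) * eC ((k + 1 : ℕ) * x))
    (hb : Summable fun k => b (k + 1) * eC ((k + 1 : ℕ) * x)) :
    ∫ t in (0 : ℝ)..1, qSeries a (x + t) * qSeries b (x + t) = 0 := by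
  have hterm : ∀ (τ : ℂ) (kl : ℕ × ℕ), a (kl.1 + 1) * eC ((kl.1 + 1 : ℕ) * τ) *
      (b (kl.2 + 1) * eC ((kl.2 + 1 : ℕ) * τ)) =
      a (kl.1 + 1) * b (kl.2 + 1) * eC (((kl.1 + kl.2 + 2 : ℕ) : ℤ) * τ) := by
    intro τ kl
    rw [mul_mul_mul_comm, ← eC_add]
    push_cast; ring_nf
  have hline : ∀ (c : ℕ → ℂ) (t : ℝ), (Summable fun k => c (k + 1) * eC ((k + 1 : ℕ) * x)) →
      Summable fun k => ‖c (k + 1) * eC ((k + 1 : ℕ) * (x + t))‖ := fun c t hc =>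
    (summable_norm_iff.mpr hc).congr fun k => by simp [norm_eC, mul_im]
  rw [intervalIntegral.integral_congr (g := fun t : ℝ => ∑' kl : ℕ × ℕ,
      a (kl.1 + 1) * b (kl.2 + 1) * eC (((kl.1 + kl.2 + 2 : ℕ) : ℤ) * (x + t))) fun t _ => by
    simp only [qSeries, tsum_mul_tsum_of_summable_norm (hline a t ha) (hline b t hb), hterm]]
  rw [integral_tsum_eC]
  · simp only [Nat.cast_eq_zero, Nat.add_eq_zero_iff, OfNat.ofNat_ne_zero, and_false, if_false,
      tsum_zero]
  · exact ((summable_norm_iff.mpr ha).mul_norm (summable_norm_iff.mpr hb)).congr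
      fun kl => by rw [hterm]

lemma integral_laurent_mul_laurent {m n : ℕ} (hm : 1 ≤ m) (hn : 1 ≤ n)
    (ha : Summable fun k => a (k + 1) * eC ((k + 1 : ℕ) * x))
    (hb : Summable fun k => b (k + 1) * eC ((k + 1 : ℕ) * x)) :
    ∫ t in (0 : ℝ)..1, (eC (-m * (x + t)) + qSeries a (x + t)) *
      (eC (-n * (x + t)) + qSeries b (x + t)) = b m + a n := by
  have hpole : ∀ r : ℕ, Continuous fun t : ℝ => eC (-r * (x + t)) := fun r => by
    exact_mod_cast continuous_eC_int_mul_add_ofReal (-r) x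
  have hAa := continuous_qSeries_add_ofReal ha
  have hAb := continuous_qSeries_add_ofReal hb
  have hpoles : ∫ t in (0 : ℝ)..1, eC (-m * (x + t)) * eC (-n * (x + t)) = 0 := by
    have := integral_eC_int_mul (-(m + n : ℕ)) x
    rw [if_neg (by omega)] at this
    rw [← this]
    congr 1 with t
    rw [← eC_add]
    push_cast; ring_nf
  have hexpand : ∀ A B C D : ℂ, (A + B) * (C + D) = A * C + A * D + C * B + B * D := by
    intros; ring
  simp only [hexpand]
  rw [intervalIntegral.integral_add, intervalIntegral.integral_add, intervalIntegral.integral_add,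
    hpoles, integral_eC_mul_qSeries hm hb, integral_eC_mul_qSeries hn ha,
    integral_qSeries_mul_qSeries ha hb]
  · ring
  all_goals exact Continuous.intervalIntegrable (by fun_prop) _ _

lemma summable_qSeries_of_transform {f : ℂ → ℂ} {a : ℕ → ℂ} {n p : ℕ} (hn : 0 < n)
    (hexp : ∀ τ ∈ ℍₒ, f τ = eC (-n * τ) + qSeries a τ)
    (hS : ∀ τ ∈ ℍₒ, f (-τ⁻¹) = τ ^ p * f τ) {τ : ℂ} (hτ : τ ∈ ℍₒ) :
    Summable fun k => a (k + 1) * eC ((k + 1 : ℕ) * τ) := by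
  by_contra hns
  have hpole : ∀ w ∈ ℍₒ, w.im < τ.im → f w = eC (-n * w) := fun w hw hlt => by
    rw [hexp w hw, qSeries, tsum_eq_zero_of_not_summable
      fun h => hns (summable_qSeries_of_im_lt h hlt), add_zero]
  -- compare `f` at `w = 1 + iε` and at `-1/w`, which lies even lower
  set ε := τ.im / 2
  have hε : 0 < ε := half_pos hτ
  have hετ : ε < τ.im := half_lt_self hτ
  set w : ℂ := ⟨1, ε⟩
  have hw : w ∈ ℍₒ := hε
  have hSw : (-w⁻¹).im = ε / (1 + ε ^ 2) := by
    simp [w, inv_im, normSq_apply, neg_div]; ring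
  have hSw_lt : (-w⁻¹).im < ε := by
    rw [hSw, div_lt_iff₀ (by positivity)]; nlinarith [pow_pos hε 3]
  have key := hS w hw
  rw [hpole _ (neg_inv_mem_upperHalfPlaneSet hw) (hSw_lt.trans hετ), hpole w hw hετ] at key
  have hnorm := congrArg norm key
  rw [norm_mul, norm_pow] at hnorm
  have hlt : ‖eC (-n * -w⁻¹)‖ < ‖eC (-n * w)‖ := by
    rw [norm_eC, norm_eC, Real.exp_lt_exp]
    have : 0 < 2 * Real.pi * n := by positivity
    simp only [neg_mul, neg_im, mul_im, natCast_re, natCast_im, zero_mul, add_zero] at hSw_lt ⊢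
    change _ < -(2 * Real.pi * -(n * ε))
    nlinarith
  have h1 : 1 ≤ ‖w‖ ^ p := one_le_pow₀ (by simpa [w] using abs_re_le_norm w)
  exact (hlt.trans_le (le_mul_of_one_le_left (norm_nonneg _) h1)).ne hnorm

end qSeries

/-- **Zagier duality**: the families `{j_n}` and `{S_n = -j_n'/n}` are dual, i.e.
`c_m(n) = -b_n(m)` for all `n, m ≥ 1`, where `j_n = q^{-n} + Σ_{m≥1} c_n(m) q^m` and
`S_n = q^{-n} + Σ_{m≥1} b_n(m) q^m`. -/
theorem zagier_duality
    (c b : ℕ → ℕ → ℂ) (j j' : ℕ → ℂ → ℂ) (hj : IsJFamily c j)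
    (hj' : ∀ n : ℕ, 1 ≤ n → ∀ τ : ℂ, 0 < τ.im →
      HasDerivAt (j n) (2 * Real.pi * Complex.I * j' n τ) τ)
    (hb : ∀ n : ℕ, 1 ≤ n → ∀ τ : ℂ, 0 < τ.im →
      -(j' n τ) / (n : ℂ) =
        eC (-(n : ℂ) * τ) + ∑' m : ℕ, b n (m + 1) * eC (((m + 1 : ℕ) : ℂ) * τ)) :
    ∀ n m : ℕ, 1 ≤ n → 1 ≤ m → c m n = -(b n m) := by
  intro n m hn hm
  obtain ⟨hjm_hol, hjm_inv, hjm_exp⟩ := hj m hm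
  have h2π : 2 * Real.pi * I ≠ 0 := by simp [Real.pi_ne_zero]
  have hn0 : (n : ℂ) ≠ 0 := by exact_mod_cast (by omega : n ≠ 0)
  have hjm : IsSlashInvariant 0 (j m) := .of_smulZ hjm_inv
  have hD : IsSlashInvariant 2 fun τ => 2 * Real.pi * I * j' n τ :=
    (IsSlashInvariant.of_smulZ (hj n hn).2.1).deriv (hj' n hn)
  have hI : I ∈ ℍₒ := by simp
  have hc_sum := summable_qSeries_of_transform (p := 0) hm hjm_exp hjm.2 hI
  have hj'S : ∀ τ ∈ ℍₒ, j' n (-τ⁻¹) = τ ^ 2 * j' n τ := fun τ hτ =>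
    mul_left_cancel₀ h2π ((hD.2 τ hτ).trans (mul_left_comm _ _ _))
  have hb_sum := summable_qSeries_of_transform (p := 2) hn (hb n hn)
    (fun τ hτ => by rw [hj'S τ hτ]; ring) hI
  have hjm_diff : DifferentiableOn ℂ (j m) ℍₒ := fun τ hτ =>
    (hjm_hol τ hτ).differentiableWithinAt
  have hzero := (hjm.mul hD).integral_eq_zero (hjm_diff.mul
    (IsExactOn.differentiableOn UpperHalfPlane.isOpen_upperHalfPlaneSet ⟨j n, hj' n hn⟩)) hI
  have hexpand : ∀ t : ℝ, j m (I + t) * (2 * Real.pi * I * j' n (I + t)) =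
      -(2 * Real.pi * I * n) * ((eC (-m * (I + t)) + qSeries (c m) (I + t)) *
        (eC (-n * (I + t)) + qSeries (b n) (I + t))) := by
    intro t
    have hIt : 0 < (I + t).im := by simp
    have hS_exp : j' n (I + t) = -n * (eC (-n * (I + t)) + qSeries (b n) (I + t)) := by
      rw [qSeries, ← hb n hn _ hIt]; field_simp
    have hj_exp : j m (I + t) = eC (-m * (I + t)) + qSeries (c m) (I + t) := hjm_exp _ hIt
    rw [hj_exp, hS_exp]
    ring
  simp only [Pi.mul_apply, hexpand, intervalIntegral.integral_const_mul,
    integral_laurent_mul_laurent hm hn hc_sum hb_sum, mul_eq_zero, neg_eq_zero, h2π, hn0,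
    or_self, false_or] at hzero
  linear_combination hzero
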